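/- arXiv:1907.12230 — 8 statements merged into one kernel-verified Lean document; each statement's English description precedes it below -/
import Mathlib

section
/- Let ξ : ℝ³ → ℝ³ be a twice continuously differentiable vector field whose Jacobian matrix is antisymmetric at every point, i.e. ∂ξ^i/∂x^j + ∂ξ^j/∂x^i = 0 on all of ℝ³ for all i, j ∈ {1,2,3}. Then there exist constant vectors a, b ∈ ℝ³ such that ξ(x) = a + b × x for all x ∈ ℝ³. (The only symmetries preserving the Euclidean metric tensor of ℝ³ are the Killing fields a + b × x, i.e. combinations of translations and rotations.) -/
noncomputable section

abbrev R3 : Type := Fin 3 → ℝ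

/-- Partial derivative of a scalar field in the `i`-th coordinate direction. -/
def pd (i : Fin 3) (f : R3 → ℝ) (x : R3) : ℝ := fderiv ℝ f x (Pi.single i 1)

/-- Curl of a vector field on ℝ³. -/
def vcurl (v : R3 → R3) (x : R3) : R3 :=
  ![pd 1 (fun y => v y 2) x - pd 2 (fun y => v y 1) x,
    pd 2 (fun y => v y 0) x - pd 0 (fun y => v y 2) x,
    pd 0 (fun y => v y 1) x - pd 1 (fun y => v y 0) x]

/-- Divergence of a vector field on ℝ³. -/
def vdiv (v : R3 → R3) (x : R3) : ℝ :=
  pd 0 (fun y => v y 0) x + pd 1 (fun y => v y 1) x + pd 2 (fun y => v y 2) x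

/-- Componentwise directional derivative `(ξ·∇)v`. -/
def dirDeriv (ξ v : R3 → R3) (x : R3) : R3 :=
  fun j => ∑ i : Fin 3, ξ x i * pd i (fun y => v y j) x

/-- Lie derivative of a vector field: `L_ξ v = (ξ·∇)v − (v·∇)ξ`. -/
def lieD (ξ v : R3 → R3) : R3 → R3 :=
  fun x => dirDeriv ξ v x - dirDeriv v ξ x

/-- Gradient of a scalar field on ℝ³. -/
def grad3 (f : R3 → ℝ) (x : R3) : R3 := fun i => pd i f x

/-- Every vector in `R3` is a combination of the `Pi.single` basis. -/
lemma pi_single_repr (v : R3) : v = ∑ i : Fin 3, v i • (Pi.single i 1 : R3) := by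
  funext j
  simp [Finset.sum_apply, Pi.single_apply]

/-- A continuous linear map on `R3` is determined by its values on the basis. -/
lemma clm_ext3 {F : Type*} [NormedAddCommGroup F] [NormedSpace ℝ F]
    (L M : R3 →L[ℝ] F) (h : ∀ i : Fin 3, L (Pi.single i 1) = M (Pi.single i 1)) : L = M := by
  ext v
  conv_lhs => rw [pi_single_repr v]
  conv_rhs => rw [pi_single_repr v]
  simp [h]

/-- the only Killing fields of the Euclidean metric on ℝ³ are
`ξ(x) = a + b × x`.  The vanishing of the Lie derivative of the Euclidean
metric along `ξ` is encoded as pointwise antisymmetry of the Jacobian of `ξ`. -/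
theorem killing_fields_are_euclidean
    (ξ : R3 → R3) (hξ : ContDiff ℝ 2 ξ)
    (hanti : ∀ x : R3, ∀ i j : Fin 3,
      pd j (fun y => ξ y i) x + pd i (fun y => ξ y j) x = 0) :
    ∃ a b : R3, ∀ x : R3, ξ x = a + crossProduct b x := by
  have hfC : ∀ i : Fin 3, ContDiff ℝ 2 (fun y => ξ y i) := fun i => contDiff_pi.mp hξ i
  have hfd : ∀ i : Fin 3, Differentiable ℝ (fun y => ξ y i) := fun i =>
    (hfC i).differentiable (by norm_num)
  have hfd' : ∀ i : Fin 3, Differentiable ℝ (fderiv ℝ (fun y => ξ y i)) := fun i =>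
    ((hfC i).fderiv_right (m := 1) (by norm_num)).differentiable (by norm_num)
  have hpd_diff : ∀ i j : Fin 3, Differentiable ℝ (pd j (fun y => ξ y i)) := by
    intro i j
    exact (ContinuousLinearMap.apply ℝ ℝ (Pi.single j 1 : R3)).differentiable.comp (hfd' i)
  have hfderiv_pd : ∀ (i j : Fin 3) (x : R3), fderiv ℝ (pd j (fun y => ξ y i)) x =
      (ContinuousLinearMap.apply ℝ ℝ (Pi.single j (1:ℝ))).comp
        (fderiv ℝ (fderiv ℝ (fun y => ξ y i)) x) := by
    intro i j x
    have := fderiv_comp x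
      ((ContinuousLinearMap.apply ℝ ℝ (Pi.single j (1:ℝ))).differentiableAt) ((hfd' i) x)
    rw [ContinuousLinearMap.fderiv] at this
    exact this
  have hsymm : ∀ (i : Fin 3) (x v w : R3),
      fderiv ℝ (fderiv ℝ (fun y => ξ y i)) x v w =
      fderiv ℝ (fderiv ℝ (fun y => ξ y i)) x w v := fun i x v w =>
    second_derivative_symmetric (fun y => ((hfd i) y).hasFDerivAt) (((hfd' i) x).hasFDerivAt) v w
  have hanti' : ∀ (i j : Fin 3) (x w : R3),
      fderiv ℝ (pd j (fun y => ξ y i)) x w + fderiv ℝ (pd i (fun y => ξ y j)) x w = 0 := by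
    intro i j x w
    have h0 : (fun x => pd j (fun y => ξ y i) x + pd i (fun y => ξ y j) x) = fun _ => (0:ℝ) :=
      funext fun x => hanti x i j
    have h1 : fderiv ℝ (fun x => pd j (fun y => ξ y i) x + pd i (fun y => ξ y j) x) x = 0 := by
      rw [h0]; simp
    rw [fderiv_fun_add ((hpd_diff i j).differentiableAt) ((hpd_diff j i).differentiableAt)] at h1
    have := congrArg (fun L : R3 →L[ℝ] ℝ => L w) h1
    simpa using this
  -- second derivatives vanish
  have hT0 : ∀ (i j k : Fin 3) (x : R3),
      fderiv ℝ (fderiv ℝ (fun y => ξ y i)) x (Pi.single k 1) (Pi.single j 1) = 0 := by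
    intro i j k x
    have key : ∀ a b c : Fin 3,
        fderiv ℝ (fderiv ℝ (fun y => ξ y a)) x (Pi.single c 1) (Pi.single b 1) +
        fderiv ℝ (fderiv ℝ (fun y => ξ y b)) x (Pi.single c 1) (Pi.single a 1) = 0 := by
      intro a b c
      have := hanti' a b x (Pi.single c 1)
      rw [hfderiv_pd, hfderiv_pd] at this
      simpa using this
    have h1 := key i j k
    have h2 := key j k i
    have h3 := key k i j
    have s1 := hsymm i x (Pi.single k 1) (Pi.single j 1)
    have s2 := hsymm j x (Pi.single i 1) (Pi.single k 1)
    have s3 := hsymm k x (Pi.single j 1) (Pi.single i 1)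
    linarith
  have hpd_fderiv0 : ∀ (i j : Fin 3) (x : R3), fderiv ℝ (pd j (fun y => ξ y i)) x = 0 := by
    intro i j x
    rw [hfderiv_pd]
    apply clm_ext3
    intro k
    simpa using hT0 i j k x
  have hpd_const : ∀ (i j : Fin 3) (x : R3),
      pd j (fun y => ξ y i) x = pd j (fun y => ξ y i) 0 := fun i j x =>
    is_const_of_fderiv_eq_zero (hpd_diff i j) (hpd_fderiv0 i j) x 0
  have hfd_const : ∀ (i : Fin 3) (x : R3),
      fderiv ℝ (fun y => ξ y i) x = fderiv ℝ (fun y => ξ y i) 0 := by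
    intro i x
    apply clm_ext3
    intro j
    exact hpd_const i j x
  -- ξ is affine
  have hrep : ∀ (i : Fin 3) (x : R3),
      ξ x i = ξ 0 i + ∑ j : Fin 3, x j * pd j (fun y => ξ y i) 0 := by
    intro i x
    set L : R3 →L[ℝ] ℝ := fderiv ℝ (fun y => ξ y i) 0 with hL
    have hdiff : Differentiable ℝ (fun y => ξ y i - L y) :=
      (hfd i).sub L.differentiable
    have hzero : ∀ y, fderiv ℝ (fun y => ξ y i - L y) y = 0 := by
      intro y
      rw [fderiv_fun_sub ((hfd i) y) L.differentiableAt, L.fderiv, hfd_const i y]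
      simp [hL]
    have hc := is_const_of_fderiv_eq_zero hdiff hzero x 0
    simp only [map_zero, sub_zero] at hc
    have hLx : L x = ∑ j : Fin 3, x j * pd j (fun y => ξ y i) 0 := by
      conv_lhs => rw [pi_single_repr x]
      rw [map_sum]
      simp [pd, mul_comm, hL]
    linarith [hc, hLx]
  have hdiag : ∀ k : Fin 3, pd k (fun y => ξ y k) (0:R3) = 0 := fun k => by
    have := hanti 0 k k; linarith
  have hoff : ∀ k l : Fin 3, pd l (fun y => ξ y k) (0:R3) = - pd k (fun y => ξ y l) 0 :=
    fun k l => by have := hanti 0 k l; linarith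
  set b : R3 :=
    ![pd 1 (fun y => ξ y 2) 0, pd 2 (fun y => ξ y 0) 0, pd 0 (fun y => ξ y 1) 0] with hb
  refine ⟨ξ 0, b, ?_⟩
  intro x
  have h0 : ξ x 0 = (ξ 0 + crossProduct b x) 0 := by
    have h := hrep 0 x
    rw [Fin.sum_univ_three] at h
    simp only [hb, cross_apply, Pi.add_apply, Matrix.cons_val_zero, Matrix.cons_val_one,
      Matrix.head_cons, Matrix.cons_val_two, Matrix.tail_cons]
    rw [h, hdiag 0, hoff 0 1]
    ring
  have h1 : ξ x 1 = (ξ 0 + crossProduct b x) 1 := by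
    have h := hrep 1 x
    rw [Fin.sum_univ_three] at h
    simp only [hb, cross_apply, Pi.add_apply, Matrix.cons_val_zero, Matrix.cons_val_one,
      Matrix.head_cons, Matrix.cons_val_two, Matrix.tail_cons]
    rw [h, hdiag 1, hoff 1 2]
    ring
  have h2 : ξ x 2 = (ξ 0 + crossProduct b x) 2 := by
    have h := hrep 2 x
    rw [Fin.sum_univ_three] at h
    simp only [hb, cross_apply, Pi.add_apply, Matrix.cons_val_zero, Matrix.cons_val_one,
      Matrix.head_cons, Matrix.cons_val_two, Matrix.tail_cons]
    rw [h, hdiag 2, hoff 2 0]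
    ring
  funext i
  fin_cases i
  · exact h0
  · exact h1
  · exact h2
end
end

section
/- Let a, b ∈ ℝ³ and let ξ_E : ℝ³ → ℝ³ be the vector field ξ_E(x) = a + b × x. Let w : ℝ³ → ℝ³ be a twice continuously differentiable vector field with div w = 0 on an open set Ω ⊆ ℝ³. Then the Lie derivative along ξ_E commutes with the curl operator on Ω: L_{ξ_E}(curl w) = curl(L_{ξ_E} w) on Ω. -/
noncomputable section

/-! ### Auxiliary lemmas -/

lemma pd_add (i : Fin 3) (f g : R3 → ℝ) (x : R3)
    (hf : DifferentiableAt ℝ f x) (hg : DifferentiableAt ℝ g x) :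
    pd i (fun y => f y + g y) x = pd i f x + pd i g x := by
  unfold pd; rw [fderiv_fun_add hf hg]; simp

lemma pd_sub (i : Fin 3) (f g : R3 → ℝ) (x : R3)
    (hf : DifferentiableAt ℝ f x) (hg : DifferentiableAt ℝ g x) :
    pd i (fun y => f y - g y) x = pd i f x - pd i g x := by
  unfold pd; rw [fderiv_fun_sub hf hg]; simp

lemma pd_mul (i : Fin 3) (f g : R3 → ℝ) (x : R3)
    (hf : DifferentiableAt ℝ f x) (hg : DifferentiableAt ℝ g x) :
    pd i (fun y => f y * g y) x = f x * pd i g x + g x * pd i f x := by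
  unfold pd; rw [fderiv_fun_mul hf hg]; simp

lemma pd_const (i : Fin 3) (c : ℝ) (x : R3) : pd i (fun _ => c) x = 0 := by
  unfold pd; simp

lemma pd_coord (i k : Fin 3) (x : R3) :
    pd i (fun y : R3 => y k) x = if k = i then 1 else 0 := by
  have h : fderiv ℝ (fun y : R3 => y k) x = ContinuousLinearMap.proj k :=
    (ContinuousLinearMap.proj k : R3 →L[ℝ] ℝ).fderiv
  unfold pd
  rw [h]
  simp [Pi.single_apply]

lemma contDiff_pd (k : Fin 3) (f : R3 → ℝ) (hf : ContDiff ℝ 2 f) :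
    ContDiff ℝ 1 (pd k f) := by
  have h1 : ContDiff ℝ 1 (fderiv ℝ f) := hf.fderiv_right (by norm_num)
  exact h1.clm_apply contDiff_const

lemma pd_pd (f : R3 → ℝ) (hf : ContDiff ℝ 2 f) (i k : Fin 3) (x : R3) :
    pd i (pd k f) x = fderiv ℝ (fderiv ℝ f) x (Pi.single i 1) (Pi.single k 1) := by
  have h1 : ContDiff ℝ 1 (fderiv ℝ f) := hf.fderiv_right (by norm_num)
  have hdf : DifferentiableAt ℝ (fderiv ℝ f) x :=
    (h1.differentiable one_ne_zero).differentiableAt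
  have h : HasFDerivAt (fun y => fderiv ℝ f y (Pi.single k 1))
      ((fderiv ℝ (fderiv ℝ f) x).flip (Pi.single k 1)) x := by
    have := hdf.hasFDerivAt.clm_apply (hasFDerivAt_const (Pi.single k (1:ℝ)) x)
    simpa using this
  show fderiv ℝ (pd k f) x (Pi.single i 1) = _
  have : pd k f = fun y => fderiv ℝ f y (Pi.single k 1) := rfl
  rw [this, h.fderiv]
  rfl

lemma pd_comm (f : R3 → ℝ) (hf : ContDiff ℝ 2 f) (i k : Fin 3) (x : R3) :
    pd i (pd k f) x = pd k (pd i f) x := by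
  rw [pd_pd f hf i k x, pd_pd f hf k i x]
  exact (hf.contDiffAt.isSymmSndFDerivAt (by norm_num)).eq _ _

set_option maxHeartbeats 2000000 in
/-- the Lie derivative along a Euclidean Killing field
`ξ_E(x) = a + b × x` commutes with the curl operator on solenoidal fields. -/
theorem lie_euclidean_commutes_with_curl
    (Ω : Set R3) (hΩ : IsOpen Ω)
    (a b : R3) (w : R3 → R3) (hw : ContDiff ℝ 2 w)
    (hdiv : ∀ x ∈ Ω, vdiv w x = 0) :
    ∀ x ∈ Ω,
      lieD (fun y => a + crossProduct b y) (vcurl w) x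
        = vcurl (lieD (fun y => a + crossProduct b y) w) x := by
  intro x hx
  have hW : ∀ j : Fin 3, ContDiff ℝ 2 (fun y => w y j) := fun j => contDiff_pi.mp hw j
  have hdW : ∀ (j : Fin 3) (y : R3), DifferentiableAt ℝ (fun z => w z j) y :=
    fun j y => ((hW j).differentiable (by norm_num)).differentiableAt
  have hdpd : ∀ (k j : Fin 3) (y : R3), DifferentiableAt ℝ (pd k (fun z => w z j)) y :=
    fun k j y => ((contDiff_pd k _ (hW j)).differentiable one_ne_zero).differentiableAt
  have hcoord : ∀ (k : Fin 3) (y : R3), DifferentiableAt ℝ (fun z : R3 => z k) y :=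
    fun k y => (ContinuousLinearMap.proj k : R3 →L[ℝ] ℝ).differentiableAt
  have hc : ∀ (j i k : Fin 3), pd i (pd k (fun z => w z j)) x = pd k (pd i (fun z => w z j)) x :=
    fun j i k => pd_comm _ (hW j) i k x
  funext j
  fin_cases j <;>
  · simp only [lieD, dirDeriv, vcurl, Pi.sub_apply, Pi.add_apply, cross_apply,
      Fin.sum_univ_three, Fin.isValue, Fin.zero_eta, Fin.mk_one, Fin.reduceFinMk, Matrix.cons_val_zero, Matrix.cons_val_one,
      Matrix.head_cons, Matrix.cons_val_two, Matrix.tail_cons]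
    simp (disch := fun_prop) only
      [pd_sub, pd_add, pd_mul, pd_const, pd_coord, Fin.reduceEq, reduceIte]
    norm_num
    try simp only [hc 0 1 0, hc 0 2 0, hc 0 2 1, hc 1 1 0, hc 1 2 0, hc 1 2 1,
      hc 2 1 0, hc 2 2 0, hc 2 2 1]
    ring
end
end

section
/- Define w : ℝ³ → ℝ³ by w(x,y,z) = (−e^x cos(y + e^z), e^x sin(y + e^z), 0), which equals −cos(e^z)∇(e^x cos y) + sin(e^z)∇(e^x sin y). Then on all of ℝ³: div w = 0 and curl w = e^z · w; in particular w is a nontrivial solenoidal Beltrami field with proportionality coefficient ĥ(x,y,z) = e^z, and its helicity density satisfies w·curl w = e^{2x+z} ≠ 0 everywhere. -/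
noncomputable section

section aux
variable (p : R3)

lemma hprojj (j : Fin 3) : HasFDerivAt (fun q : R3 => q j)
    (ContinuousLinearMap.proj j : R3 →L[ℝ] ℝ) p :=
  (ContinuousLinearMap.proj j : R3 →L[ℝ] ℝ).hasFDerivAt

lemma pd_w0 (i : Fin 3) :
    pd i (fun q : R3 => -(Real.exp (q 0)) * Real.cos (q 1 + Real.exp (q 2))) p
      = -(Real.exp (p 0)) * Real.cos (p 1 + Real.exp (p 2)) * ((Pi.single i (1:ℝ) : R3) 0)
        + Real.exp (p 0) * Real.sin (p 1 + Real.exp (p 2)) *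
          (((Pi.single i (1:ℝ) : R3) 1) + Real.exp (p 2) * ((Pi.single i (1:ℝ) : R3) 2)) := by
  have hA := (hprojj p 1).add ((hprojj p 2).exp)
  have h0 : HasFDerivAt (fun q : R3 => -(Real.exp (q 0)) * Real.cos (q 1 + Real.exp (q 2)))
      (-(Real.exp (p 0) • (-Real.sin (p 1 + Real.exp (p 2)) •
          ((ContinuousLinearMap.proj 1 : R3 →L[ℝ] ℝ) + Real.exp (p 2) • ContinuousLinearMap.proj 2))
        + Real.cos (p 1 + Real.exp (p 2)) • (Real.exp (p 0) • (ContinuousLinearMap.proj 0 : R3 →L[ℝ] ℝ)))) p := by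
    have h : HasFDerivAt (fun q : R3 => -(Real.exp (q 0) * Real.cos (q 1 + Real.exp (q 2)))) _ p :=
      ((hprojj p 0).exp.mul hA.cos).neg
    simpa [neg_mul] using h
  rw [pd, h0.fderiv]
  simp
  ring

lemma pd_w1 (i : Fin 3) :
    pd i (fun q : R3 => Real.exp (q 0) * Real.sin (q 1 + Real.exp (q 2))) p
      = Real.exp (p 0) * Real.sin (p 1 + Real.exp (p 2)) * ((Pi.single i (1:ℝ) : R3) 0)
        + Real.exp (p 0) * Real.cos (p 1 + Real.exp (p 2)) *
          (((Pi.single i (1:ℝ) : R3) 1) + Real.exp (p 2) * ((Pi.single i (1:ℝ) : R3) 2)) := by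
  have hA := (hprojj p 1).add ((hprojj p 2).exp)
  have h1 : HasFDerivAt (fun q : R3 => Real.exp (q 0) * Real.sin (q 1 + Real.exp (q 2))) _ p :=
    (hprojj p 0).exp.mul hA.sin
  rw [pd, h1.fderiv]
  simp
  ring

lemma pd_w0' (i : Fin 3) :
    pd i (fun q : R3 => -(Real.exp (q 0) * Real.cos (q 1 + Real.exp (q 2)))) p
      = -(Real.exp (p 0)) * Real.cos (p 1 + Real.exp (p 2)) * ((Pi.single i (1:ℝ) : R3) 0)
        + Real.exp (p 0) * Real.sin (p 1 + Real.exp (p 2)) *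
          (((Pi.single i (1:ℝ) : R3) 1) + Real.exp (p 2) * ((Pi.single i (1:ℝ) : R3) 2)) := by
  have := pd_w0 p i
  simpa [neg_mul] using this

end aux

/-- the field `w = (−eˣ cos(y+eᶻ), eˣ sin(y+eᶻ), 0)` is a nontrivial
solenoidal Beltrami field on all of ℝ³ with proportionality coefficient `eᶻ`
and everywhere nonzero helicity density `w·curl w = e^{2x+z}`. -/
theorem explicit_beltrami_exp_z :
    let w : R3 → R3 := fun p =>
      ![-(Real.exp (p 0)) * Real.cos (p 1 + Real.exp (p 2)),
        Real.exp (p 0) * Real.sin (p 1 + Real.exp (p 2)), 0]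
    ∀ p : R3,
      vdiv w p = 0
      ∧ vcurl w p = Real.exp (p 2) • w p
      ∧ (∑ i : Fin 3, w p i * vcurl w p i) = Real.exp (2 * p 0 + p 2)
      ∧ (∑ i : Fin 3, w p i * vcurl w p i) ≠ 0 := by
  intro w p
  have e0 : (fun y : R3 => w y 0)
      = (fun q : R3 => -(Real.exp (q 0)) * Real.cos (q 1 + Real.exp (q 2))) := rfl
  have e1 : (fun y : R3 => w y 1)
      = (fun q : R3 => Real.exp (q 0) * Real.sin (q 1 + Real.exp (q 2))) := rfl
  have e2 : (fun y : R3 => w y 2) = (fun _ : R3 => (0:ℝ)) := rfl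
  have hz : ∀ i : Fin 3, pd i (fun _ : R3 => (0:ℝ)) p = 0 := by
    intro i; simp [pd]
  have hw : w p = ![-(Real.exp (p 0)) * Real.cos (p 1 + Real.exp (p 2)),
      Real.exp (p 0) * Real.sin (p 1 + Real.exp (p 2)), 0] := rfl
  have hdiv : vdiv w p = 0 := by
    rw [vdiv, e0, e1, e2, pd_w0, pd_w1, hz]
    simp [Pi.single_apply]
  have hcurl : vcurl w p = Real.exp (p 2) • w p := by
    funext j
    fin_cases j <;>
      simp [vcurl, e0, e1, e2, pd_w0, pd_w0', pd_w1, hz, hw, Pi.single_apply] <;> ring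
  have hhel : (∑ i : Fin 3, w p i * vcurl w p i) = Real.exp (2 * p 0 + p 2) := by
    rw [hcurl, Fin.sum_univ_three, hw]
    have hs := Real.sin_sq_add_cos_sq (p 1 + Real.exp (p 2))
    simp only [Matrix.cons_val_zero, Matrix.cons_val_one, Matrix.head_cons,
      Matrix.cons_val_two, Matrix.tail_cons, Pi.smul_apply, smul_eq_mul,
      two_mul, Real.exp_add]
    linear_combination (Real.exp (p 0) * Real.exp (p 0) * Real.exp (p 2)) * hs
  exact ⟨hdiv, hcurl, hhel, hhel ▸ Real.exp_ne_zero _⟩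
end
end

section
/- Define w : ℝ³ → ℝ³ by w(x,y,z) = (−e^x cos(y + z²), e^x sin(y + z²), 0), which equals −cos(z²)∇(e^x cos y) + sin(z²)∇(e^x sin y). Then on all of ℝ³: div w = 0 and curl w = 2z · w, so w is a solenoidal Beltrami field with non-constant proportionality coefficient ĥ(x,y,z) = 2z. -/
noncomputable section

open Real ContinuousLinearMap

lemma hasF_u (p : R3) :
    HasFDerivAt (fun y : R3 => y 1 + y 2 ^ 2)
      (ContinuousLinearMap.proj 1 + (2 * p 2) • ContinuousLinearMap.proj 2 : R3 →L[ℝ] ℝ) p := by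
  have h1 : HasFDerivAt (fun y : R3 => y 1) (ContinuousLinearMap.proj 1 : R3 →L[ℝ] ℝ) p :=
    (ContinuousLinearMap.proj 1 : R3 →L[ℝ] ℝ).hasFDerivAt
  have h2 : HasFDerivAt (fun y : R3 => y 2) (ContinuousLinearMap.proj 2 : R3 →L[ℝ] ℝ) p :=
    (ContinuousLinearMap.proj 2 : R3 →L[ℝ] ℝ).hasFDerivAt
  have h2sq : HasFDerivAt (fun y : R3 => y 2 * y 2)
      (p 2 • ContinuousLinearMap.proj 2 + p 2 • ContinuousLinearMap.proj 2 : R3 →L[ℝ] ℝ) p := h2.mul h2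
  have h2sq' : HasFDerivAt (fun y : R3 => y 2 ^ 2)
      (p 2 • ContinuousLinearMap.proj 2 + p 2 • ContinuousLinearMap.proj 2 : R3 →L[ℝ] ℝ) p := by
    simpa [pow_two] using h2sq
  have : HasFDerivAt (fun y : R3 => y 1 + y 2 ^ 2)
      (ContinuousLinearMap.proj 1 + (p 2 • ContinuousLinearMap.proj 2 + p 2 • ContinuousLinearMap.proj 2) : R3 →L[ℝ] ℝ) p :=
    h1.add h2sq'
  convert this using 1
  ext y
  simp
  ring

lemma hasF_cos (p : R3) :
    HasFDerivAt (fun y : R3 => Real.exp (y 0) * Real.cos (y 1 + y 2 ^ 2))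
      ((Real.exp (p 0) * (-Real.sin (p 1 + p 2 ^ 2))) •
          (ContinuousLinearMap.proj 1 + (2 * p 2) • ContinuousLinearMap.proj 2)
        + (Real.cos (p 1 + p 2 ^ 2) * Real.exp (p 0)) • (ContinuousLinearMap.proj 0) : R3 →L[ℝ] ℝ) p := by
  have h0 : HasFDerivAt (fun y : R3 => y 0) (ContinuousLinearMap.proj 0 : R3 →L[ℝ] ℝ) p :=
    (ContinuousLinearMap.proj 0 : R3 →L[ℝ] ℝ).hasFDerivAt
  have hexp : HasFDerivAt (fun y : R3 => Real.exp (y 0))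
      (Real.exp (p 0) • (ContinuousLinearMap.proj 0) : R3 →L[ℝ] ℝ) p :=
    h0.exp
  have hcos : HasFDerivAt (fun y : R3 => Real.cos (y 1 + y 2 ^ 2))
      ((-Real.sin (p 1 + p 2 ^ 2)) • (ContinuousLinearMap.proj 1 + (2 * p 2) • ContinuousLinearMap.proj 2) : R3 →L[ℝ] ℝ) p :=
    (hasF_u p).cos
  have : HasFDerivAt (fun y : R3 => Real.exp (y 0) * Real.cos (y 1 + y 2 ^ 2))
      (Real.exp (p 0) • ((-Real.sin (p 1 + p 2 ^ 2)) • (ContinuousLinearMap.proj 1 + (2 * p 2) • ContinuousLinearMap.proj 2)) + Real.cos (p 1 + p 2 ^ 2) • (Real.exp (p 0) • ContinuousLinearMap.proj 0) : R3 →L[ℝ] ℝ) p :=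
    hexp.mul hcos
  convert this using 1
  ext y
  simp
  ring

lemma hasF_sin (p : R3) :
    HasFDerivAt (fun y : R3 => Real.exp (y 0) * Real.sin (y 1 + y 2 ^ 2))
      ((Real.exp (p 0) * (Real.cos (p 1 + p 2 ^ 2))) •
          (ContinuousLinearMap.proj 1 + (2 * p 2) • ContinuousLinearMap.proj 2)
        + (Real.sin (p 1 + p 2 ^ 2) * Real.exp (p 0)) • (ContinuousLinearMap.proj 0) : R3 →L[ℝ] ℝ) p := by
  have h0 : HasFDerivAt (fun y : R3 => y 0) (ContinuousLinearMap.proj 0 : R3 →L[ℝ] ℝ) p :=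
    (ContinuousLinearMap.proj 0 : R3 →L[ℝ] ℝ).hasFDerivAt
  have hexp : HasFDerivAt (fun y : R3 => Real.exp (y 0))
      (Real.exp (p 0) • (ContinuousLinearMap.proj 0) : R3 →L[ℝ] ℝ) p :=
    h0.exp
  have hsin : HasFDerivAt (fun y : R3 => Real.sin (y 1 + y 2 ^ 2))
      ((Real.cos (p 1 + p 2 ^ 2)) • (ContinuousLinearMap.proj 1 + (2 * p 2) • ContinuousLinearMap.proj 2) : R3 →L[ℝ] ℝ) p :=
    (hasF_u p).sin
  have : HasFDerivAt (fun y : R3 => Real.exp (y 0) * Real.sin (y 1 + y 2 ^ 2))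
      (Real.exp (p 0) • ((Real.cos (p 1 + p 2 ^ 2)) • (ContinuousLinearMap.proj 1 + (2 * p 2) • ContinuousLinearMap.proj 2)) + Real.sin (p 1 + p 2 ^ 2) • (Real.exp (p 0) • ContinuousLinearMap.proj 0) : R3 →L[ℝ] ℝ) p :=
    hexp.mul hsin
  convert this using 1
  ext y
  simp
  ring

lemma pd_cos (i : Fin 3) (p : R3) :
    pd i (fun y : R3 => Real.exp (y 0) * Real.cos (y 1 + y 2 ^ 2)) p =
      Real.exp (p 0) * (-Real.sin (p 1 + p 2 ^ 2)) * ((Pi.single i 1 : R3) 1 + (2 * p 2) * (Pi.single i 1 : R3) 2)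
      + Real.cos (p 1 + p 2 ^ 2) * Real.exp (p 0) * (Pi.single i 1 : R3) 0 := by
  rw [pd, (hasF_cos p).fderiv]
  simp
  ring

lemma pd_sin (i : Fin 3) (p : R3) :
    pd i (fun y : R3 => Real.exp (y 0) * Real.sin (y 1 + y 2 ^ 2)) p =
      Real.exp (p 0) * (Real.cos (p 1 + p 2 ^ 2)) * ((Pi.single i 1 : R3) 1 + (2 * p 2) * (Pi.single i 1 : R3) 2)
      + Real.sin (p 1 + p 2 ^ 2) * Real.exp (p 0) * (Pi.single i 1 : R3) 0 := by
  rw [pd, (hasF_sin p).fderiv]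
  simp
  ring

lemma pd_negcos (i : Fin 3) (p : R3) :
    pd i (fun y : R3 => -(Real.exp (y 0)) * Real.cos (y 1 + y 2 ^ 2)) p =
      -(Real.exp (p 0) * (-Real.sin (p 1 + p 2 ^ 2)) * ((Pi.single i 1 : R3) 1 + (2 * p 2) * (Pi.single i 1 : R3) 2)
      + Real.cos (p 1 + p 2 ^ 2) * Real.exp (p 0) * (Pi.single i 1 : R3) 0) := by
  have h := (hasF_cos p).neg
  rw [pd]
  have : (fun y : R3 => -(Real.exp (y 0)) * Real.cos (y 1 + y 2 ^ 2)) =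
      fun y : R3 => -(Real.exp (y 0) * Real.cos (y 1 + y 2 ^ 2)) := by ext y; ring
  rw [this, HasFDerivAt.fderiv (f := fun y : R3 => -(Real.exp (y 0) * Real.cos (y 1 + y 2 ^ 2))) h]
  simp
  ring

lemma pd_const0 (i : Fin 3) (p : R3) : pd i (fun _ : R3 => (0:ℝ)) p = 0 := by
  simp [pd]


/-- the field `w = (−eˣ cos(y+z²), eˣ sin(y+z²), 0)` is a solenoidal
Beltrami field on all of ℝ³ with non-constant proportionality coefficient `2z`. -/
theorem explicit_beltrami_z_squared :
    let w : R3 → R3 := fun p =>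
      ![-(Real.exp (p 0)) * Real.cos (p 1 + (p 2) ^ 2),
        Real.exp (p 0) * Real.sin (p 1 + (p 2) ^ 2), 0]
    ∀ p : R3,
      vdiv w p = 0 ∧ vcurl w p = (2 * p 2) • w p := by
  intro w p
  have e0 : (fun y : R3 => w y 0) = fun y : R3 => -(Real.exp (y 0)) * Real.cos (y 1 + y 2 ^ 2) := rfl
  have e1 : (fun y : R3 => w y 1) = fun y : R3 => Real.exp (y 0) * Real.sin (y 1 + y 2 ^ 2) := rfl
  have e2 : (fun y : R3 => w y 2) = fun y : R3 => (0:ℝ) := rfl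
  constructor
  · simp only [vdiv, e0, e1, e2, pd_negcos, pd_sin, pd_const0]
    simp [Pi.single_apply]
    ring
  · funext i
    fin_cases i <;>
      · show _ = (2 * p 2) * w p _
        simp only [vcurl, e0, e1, e2, pd_negcos, pd_sin, pd_const0]
        simp [w, Pi.single_apply]
        ring
end
end

section
/- Define w : ℝ³ → ℝ³ by w(x,y,z) = (−e^x cos(y + z²), e^x sin(y + z²), 0), and let Ω be the open unit ball in ℝ³ centered at the origin. Then w has no continuous Euclidean symmetry on Ω: for all a, b ∈ ℝ³, if the Lie derivative L_{ξ_E} w vanishes identically on Ω for ξ_E(x) = a + b × x, then a = 0 and b = 0. -/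
noncomputable section

open ContinuousLinearMap Real

lemma pd_eq {f : R3 → ℝ} {f' : R3 →L[ℝ] ℝ} {x : R3} (h : HasFDerivAt f f' x) (i : Fin 3) :
    pd i f x = f' (Pi.single i 1) := by rw [pd, h.fderiv]

lemma hL (x : R3) : HasFDerivAt (fun y : R3 => y 1 + y 2 ^ 2)
    ((proj 1 : R3 →L[ℝ] ℝ) + (x 2 • proj 2 + x 2 • proj 2)) x := by
  have h2 : HasFDerivAt (fun y : R3 => y 2 ^ 2) (x 2 • (proj 2 : R3 →L[ℝ] ℝ) + x 2 • proj 2) x := by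
    have h1 : HasFDerivAt (fun y : R3 => y 2) (proj 2 : R3 →L[ℝ] ℝ) x := hasFDerivAt_apply 2 x
    simpa [pow_two] using (show HasFDerivAt (fun y : R3 => y 2 * y 2) _ x from h1.mul h1)
  exact (hasFDerivAt_apply 1 x).add h2

lemma he (x : R3) : HasFDerivAt (fun y : R3 => Real.exp (y 0))
    (Real.exp (x 0) • (proj 0 : R3 →L[ℝ] ℝ)) x :=
  (Real.hasDerivAt_exp (x 0)).comp_hasFDerivAt (f := fun y : R3 => y 0) x (hasFDerivAt_apply 0 x)

lemma pd_f1 (i : Fin 3) (x : R3) :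
    pd i (fun y : R3 => Real.exp (y 0) * Real.sin (y 1 + y 2 ^ 2)) x =
      Real.exp (x 0) * Real.cos (x 1 + x 2 ^ 2) * ((Pi.single i (1:ℝ) : R3) 1 + 2 * x 2 * (Pi.single i (1:ℝ) : R3) 2)
      + Real.exp (x 0) * Real.sin (x 1 + x 2 ^ 2) * (Pi.single i (1:ℝ) : R3) 0 := by
  have hs : HasFDerivAt (fun y : R3 => Real.sin (y 1 + y 2 ^ 2))
      (Real.cos (x 1 + x 2 ^ 2) • ((proj 1 : R3 →L[ℝ] ℝ) + (x 2 • proj 2 + x 2 • proj 2))) x :=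
    (Real.hasDerivAt_sin (x 1 + x 2 ^ 2)).comp_hasFDerivAt (f := fun y : R3 => y 1 + y 2 ^ 2) x (hL x)
  rw [pd_eq (f := fun y : R3 => Real.exp (y 0) * Real.sin (y 1 + y 2 ^ 2)) ((he x).mul hs) i]
  simp [ContinuousLinearMap.add_apply, ContinuousLinearMap.smul_apply]
  ring

lemma pd_f0 (i : Fin 3) (x : R3) :
    pd i (fun y : R3 => -(Real.exp (y 0)) * Real.cos (y 1 + y 2 ^ 2)) x =
      -(Real.exp (x 0)) * Real.cos (x 1 + x 2 ^ 2) * (Pi.single i (1:ℝ) : R3) 0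
      + Real.exp (x 0) * Real.sin (x 1 + x 2 ^ 2) * ((Pi.single i (1:ℝ) : R3) 1 + 2 * x 2 * (Pi.single i (1:ℝ) : R3) 2) := by
  have hc : HasFDerivAt (fun y : R3 => Real.cos (y 1 + y 2 ^ 2))
      ((-Real.sin (x 1 + x 2 ^ 2)) • ((proj 1 : R3 →L[ℝ] ℝ) + (x 2 • proj 2 + x 2 • proj 2))) x :=
    (Real.hasDerivAt_cos (x 1 + x 2 ^ 2)).comp_hasFDerivAt (f := fun y : R3 => y 1 + y 2 ^ 2) x (hL x)
  rw [pd_eq (f := fun y : R3 => -(Real.exp (y 0)) * Real.cos (y 1 + y 2 ^ 2)) (((he x).neg).mul hc) i]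
  simp [ContinuousLinearMap.add_apply, ContinuousLinearMap.smul_apply]
  ring

lemma pd_xi (c d e : ℝ) (k l : Fin 3) (i : Fin 3) (x : R3) :
    pd i (fun y : R3 => c + (d * y k - e * y l)) x =
      d * (Pi.single i (1:ℝ) : R3) k - e * (Pi.single i (1:ℝ) : R3) l := by
  have h : HasFDerivAt (fun y : R3 => c + (d * y k - e * y l))
      ((d • (proj k : R3 →L[ℝ] ℝ)) - (e • proj l)) x := by
    have h1 : HasFDerivAt (fun y : R3 => y k) (proj k : R3 →L[ℝ] ℝ) x := hasFDerivAt_apply k x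
    have h2 : HasFDerivAt (fun y : R3 => y l) (proj l : R3 →L[ℝ] ℝ) x := hasFDerivAt_apply l x
    simpa [Pi.add_def, Pi.sub_def] using (hasFDerivAt_const c x).add ((h1.const_mul d).sub (h2.const_mul e))
  rw [pd_eq h i]
  simp

lemma pd_zero (i : Fin 3) (x : R3) : pd i (fun _ : R3 => (0:ℝ)) x = 0 := by
  rw [pd_eq (hasFDerivAt_const 0 x) i]; simp


def Wb : R3 → R3 := fun p : R3 =>
  ![-(Real.exp (p 0)) * Real.cos (p 1 + (p 2) ^ 2),
    Real.exp (p 0) * Real.sin (p 1 + (p 2) ^ 2), 0]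

lemma lie0 (a b x : R3) :
    lieD (fun y => a + crossProduct b y) Wb x 0 =
    Real.exp (x 0) * (-(a 0 + (b 1 * x 2 - b 2 * x 1)) * Real.cos (x 1 + x 2 ^ 2)
      + ((a 1 + (b 2 * x 0 - b 0 * x 2)) + 2 * x 2 * (a 2 + (b 0 * x 1 - b 1 * x 0)) + b 2) * Real.sin (x 1 + x 2 ^ 2)) := by
  simp only [lieD, Wb, Pi.sub_apply, dirDeriv, Fin.sum_univ_three, Pi.add_apply, cross_apply,
    Matrix.cons_val_zero, Matrix.cons_val_one, Matrix.head_cons, Fin.isValue]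
  rw [pd_f0, pd_f0, pd_f0, pd_xi, pd_xi, pd_xi]
  simp [Pi.single_apply]
  ring

lemma lie1 (a b x : R3) :
    lieD (fun y => a + crossProduct b y) Wb x 1 =
    Real.exp (x 0) * ((a 0 + (b 1 * x 2 - b 2 * x 1)) * Real.sin (x 1 + x 2 ^ 2)
      + ((a 1 + (b 2 * x 0 - b 0 * x 2)) + 2 * x 2 * (a 2 + (b 0 * x 1 - b 1 * x 0)) + b 2) * Real.cos (x 1 + x 2 ^ 2)) := by
  simp only [lieD, Wb, Pi.sub_apply, dirDeriv, Fin.sum_univ_three, Pi.add_apply, cross_apply,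
    Matrix.cons_val_zero, Matrix.cons_val_one, Matrix.head_cons, Fin.isValue]
  rw [pd_f1, pd_f1, pd_f1, pd_xi, pd_xi, pd_xi]
  simp [Pi.single_apply]
  ring

lemma lie2 (a b x : R3) :
    lieD (fun y => a + crossProduct b y) Wb x 2 =
    -(Real.exp (x 0)) * (b 1 * Real.cos (x 1 + x 2 ^ 2) + b 0 * Real.sin (x 1 + x 2 ^ 2)) := by
  simp only [lieD, Wb, Pi.sub_apply, dirDeriv, Fin.sum_univ_three, Pi.add_apply, cross_apply,
    Matrix.cons_val_zero, Matrix.cons_val_one, Matrix.head_cons, Matrix.cons_val_two,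
    Matrix.tail_cons, Fin.isValue]
  rw [pd_zero, pd_zero, pd_zero, pd_xi, pd_xi, pd_xi]
  simp [Pi.single_apply]
  ring


set_option maxHeartbeats 2000000 in
/-- the Beltrami field `w = (−eˣ cos(y+z²), eˣ sin(y+z²), 0)` has no
continuous Euclidean symmetry on the open unit ball centered at the origin. -/
theorem explicit_beltrami_z_squared_no_euclidean_symmetry :
    let w : R3 → R3 := fun p =>
      ![-(Real.exp (p 0)) * Real.cos (p 1 + (p 2) ^ 2),
        Real.exp (p 0) * Real.sin (p 1 + (p 2) ^ 2), 0]
    let Ω : Set R3 := {p | (p 0) ^ 2 + (p 1) ^ 2 + (p 2) ^ 2 < 1}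
    ∀ a b : R3,
      (∀ x ∈ Ω, lieD (fun y => a + crossProduct b y) w x = 0) →
      a = 0 ∧ b = 0 := by
  intro w Ω a b h
  have key : ∀ x : R3, (x 0) ^ 2 + (x 1) ^ 2 + (x 2) ^ 2 < 1 →
      ∀ j, lieD (fun y => a + crossProduct b y) Wb x j = 0 :=
    fun x hx j => congrFun (h x hx) j
  -- point 0
  have m0 : ((0:R3) 0) ^ 2 + ((0:R3) 1) ^ 2 + ((0:R3) 2) ^ 2 < 1 := by norm_num
  have e00 := key 0 m0 0
  have e01 := key 0 m0 1
  have e02 := key 0 m0 2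
  rw [lie0] at e00; rw [lie1] at e01; rw [lie2] at e02
  simp [Real.exp_zero, Real.cos_zero, Real.sin_zero] at e00 e01 e02
  -- e00 : a 0 = 0 (roughly), e01 : a 1 + b 2 = 0, e02 : b 1 = 0
  -- point p1 = ![0,1/2,0]
  have m1 : ((![0,1/2,0]:R3) 0) ^ 2 + ((![0,1/2,0]:R3) 1) ^ 2 + ((![0,1/2,0]:R3) 2) ^ 2 < 1 := by
    norm_num [Matrix.cons_val_two]
  have e10 := key ![0,1/2,0] m1 0
  have e11 := key ![0,1/2,0] m1 1
  have e12 := key ![0,1/2,0] m1 2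
  rw [lie0] at e10; rw [lie1] at e11; rw [lie2] at e12
  norm_num [Real.exp_zero, Matrix.cons_val_two] at e10 e11 e12
  -- facts about cos/sin (1/2)
  have hpi := Real.pi_gt_three
  have hC : Real.cos (1/2 : ℝ) > 0 := by
    apply Real.cos_pos_of_mem_Ioo
    constructor <;> nlinarith
  have hS : Real.sin (1/2 : ℝ) > 0 := by
    apply Real.sin_pos_of_pos_of_lt_pi <;> nlinarith
  rw [e00, e01] at e10
  have hb2 : b 2 = 0 := by
    have h' : b 2 * Real.cos (1/2 : ℝ) = 0 := by linarith
    rcases mul_eq_zero.1 h' with h'' | h''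
    · exact h''
    · linarith
  have ha1 : a 1 = 0 := by linarith
  have hb0 : b 0 = 0 := by
    rw [e02] at e12
    have h' : b 0 * Real.sin (1/2 : ℝ) = 0 := by linarith
    rcases mul_eq_zero.1 h' with h'' | h''
    · exact h''
    · linarith
  -- point p2 = ![0,0,1/2]
  have m2 : ((![0,0,1/2]:R3) 0) ^ 2 + ((![0,0,1/2]:R3) 1) ^ 2 + ((![0,0,1/2]:R3) 2) ^ 2 < 1 := by
    norm_num [Matrix.cons_val_two]
  have e21 := key ![0,0,1/2] m2 1
  rw [lie1] at e21
  norm_num [Real.exp_zero, Matrix.cons_val_two, e00, ha1, hb0, hb2, e02] at e21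
  have hC4 : Real.cos ((1/2 : ℝ)^2) > 0 := by
    apply Real.cos_pos_of_mem_Ioo
    constructor <;> nlinarith
  have ha2 : a 2 = 0 := by
    rcases e21 with h'' | h''
    · exact h''
    · nlinarith
  refine ⟨funext fun i => ?_, funext fun i => ?_⟩ <;> fin_cases i <;>
    simp [e00, ha1, ha2, hb0, e02, hb2]
end
end

section
/- Let U ⊆ ℝ² be open, φ : ℝ² → ℝ twice continuously differentiable with φ_yy + φ_zz = 0 on U (φ harmonic in the variables (y,z)), and ψ : ℝ² → ℝ continuously differentiable satisfying −y·ψ_y + φ_y·ψ_y + φ_z·ψ_z = −1 on U. Define on Ω = ℝ × U ⊆ ℝ³ the vector field w(x,y,z) = (x + e^{ψ(y,z)}, −y + φ_y(y,z), φ_z(y,z)) and the scalar field χ(x,y,z) = e^{ψ(y,z)}(x + e^{ψ(y,z)}/2). Then on Ω: div w = 0 and w × (curl w) = ∇χ, i.e. w is a magnetofluidostatic field with pressure field χ. -/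
noncomputable section

/-- Partial derivative of a function of two real variables in the first variable. -/
def pdfst (f : ℝ × ℝ → ℝ) (p : ℝ × ℝ) : ℝ := fderiv ℝ f p (1, 0)

/-- Partial derivative of a function of two real variables in the second variable. -/
def pdsnd (f : ℝ × ℝ → ℝ) (p : ℝ × ℝ) : ℝ := fderiv ℝ f p (0, 1)

def L23 : R3 →L[ℝ] ℝ × ℝ :=
  (ContinuousLinearMap.proj 1).prod (ContinuousLinearMap.proj 2)

lemma L23_single0 : L23 (Pi.single (0 : Fin 3) (1 : ℝ)) = (0, 0) := by
  simp [L23, Pi.single_apply]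

lemma L23_single1 : L23 (Pi.single (1 : Fin 3) (1 : ℝ)) = (1, 0) := by
  simp [L23, Pi.single_apply]

lemma L23_single2 : L23 (Pi.single (2 : Fin 3) (1 : ℝ)) = (0, 1) := by
  simp [L23, Pi.single_apply]

lemma hasF_comp23 {g : ℝ × ℝ → ℝ} {q : R3} (hg : DifferentiableAt ℝ g (q 1, q 2)) :
    HasFDerivAt (fun q' : R3 => g (q' 1, q' 2)) ((fderiv ℝ g (q 1, q 2)).comp L23) q :=
  hg.hasFDerivAt.comp q L23.hasFDerivAt

lemma clairaut (φ : ℝ × ℝ → ℝ) (hφ : ContDiff ℝ 2 φ) (p : ℝ × ℝ) :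
    pdfst (pdsnd φ) p = pdsnd (pdfst φ) p := by
  have hF : Differentiable ℝ (fderiv ℝ φ) :=
    (hφ.fderiv_right (m := 1) (by norm_num)).differentiable one_ne_zero
  have hsymm := second_derivative_symmetric (f := φ) (f' := fderiv ℝ φ)
    (fun y => (hφ.differentiable two_ne_zero y).hasFDerivAt) (hF p).hasFDerivAt
  have h1 : HasFDerivAt (fun p' => fderiv ℝ φ p' (0, 1))
      ((fderiv ℝ φ p).comp 0 + (fderiv ℝ (fderiv ℝ φ) p).flip ((0 : ℝ), (1 : ℝ))) p :=
    (hF p).hasFDerivAt.clm_apply (hasFDerivAt_const _ _)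
  have h2 : HasFDerivAt (fun p' => fderiv ℝ φ p' (1, 0))
      ((fderiv ℝ φ p).comp 0 + (fderiv ℝ (fderiv ℝ φ) p).flip ((1 : ℝ), (0 : ℝ))) p :=
    (hF p).hasFDerivAt.clm_apply (hasFDerivAt_const _ _)
  have e1 : pdfst (pdsnd φ) p = fderiv ℝ (fderiv ℝ φ) p (1, 0) (0, 1) := by
    rw [pdfst, show pdsnd φ = fun p' => fderiv ℝ φ p' (0, 1) from rfl, h1.fderiv]
    simp
  have e2 : pdsnd (pdfst φ) p = fderiv ℝ (fderiv ℝ φ) p (0, 1) (1, 0) := by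
    rw [pdsnd, show pdfst φ = fun p' => fderiv ℝ φ p' (1, 0) from rfl, h2.fderiv]
    simp
  rw [e1, e2, hsymm]

set_option maxHeartbeats 1600000 in
/-- from a function `φ(y,z)` harmonic on `U` and a function `ψ(y,z)`
with `−y ψ_y + φ_y ψ_y + φ_z ψ_z = −1` on `U`, the field
`w = (x + e^ψ, −y + φ_y, φ_z)` is a magnetofluidostatic field on `Ω = ℝ × U`
with pressure field `χ = e^ψ (x + e^ψ/2)`. -/
theorem clebsch_construction_magnetofluidostatic
    (U : Set (ℝ × ℝ)) (hU : IsOpen U)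
    (φ ψ : ℝ × ℝ → ℝ)
    (hφ : ContDiff ℝ 2 φ) (hψ : ContDiff ℝ 1 ψ)
    (hharm : ∀ p ∈ U, pdfst (pdfst φ) p + pdsnd (pdsnd φ) p = 0)
    (hchar : ∀ p ∈ U,
      -(p.1) * pdfst ψ p + pdfst φ p * pdfst ψ p + pdsnd φ p * pdsnd ψ p = -1) :
    let w : R3 → R3 := fun q =>
      ![q 0 + Real.exp (ψ (q 1, q 2)),
        -(q 1) + pdfst φ (q 1, q 2),
        pdsnd φ (q 1, q 2)]
    let χ : R3 → ℝ := fun q =>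
      Real.exp (ψ (q 1, q 2)) * (q 0 + Real.exp (ψ (q 1, q 2)) / 2)
    ∀ q : R3, (q 1, q 2) ∈ U →
      vdiv w q = 0 ∧ crossProduct (w q) (vcurl w q) = grad3 χ q := by
  intro w χ q hq
  have hψd : Differentiable ℝ ψ := hψ.differentiable one_ne_zero
  have hF : Differentiable ℝ (fderiv ℝ φ) :=
    (hφ.fderiv_right (m := 1) (by norm_num)).differentiable one_ne_zero
  have hpf : Differentiable ℝ (pdfst φ) :=
    hF.clm_apply (differentiable_const _)
  have hps : Differentiable ℝ (pdsnd φ) :=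
    hF.clm_apply (differentiable_const _)
  set p : ℝ × ℝ := (q 1, q 2) with hp
  set a : ℝ := Real.exp (ψ p) with ha
  set sy : ℝ := pdfst ψ p with hsy
  set sz : ℝ := pdsnd ψ p with hsz
  set fy : ℝ := pdfst φ p with hfy
  set fz : ℝ := pdsnd φ p with hfz
  -- derivative of the exponential factor
  have hA : HasFDerivAt (fun q' : R3 => Real.exp (ψ (q' 1, q' 2)))
      (a • ((fderiv ℝ ψ p).comp L23)) q := (hasF_comp23 (hψd p)).exp
  -- derivatives of the three components of w
  have hw0 : HasFDerivAt (fun q' : R3 => q' 0 + Real.exp (ψ (q' 1, q' 2)))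
      ((ContinuousLinearMap.proj 0 : R3 →L[ℝ] ℝ) + a • ((fderiv ℝ ψ p).comp L23)) q :=
    (ContinuousLinearMap.proj (R := ℝ) (φ := fun _ : Fin 3 => ℝ) 0).hasFDerivAt.add hA
  have hw1 : HasFDerivAt (fun q' : R3 => -(q' 1) + pdfst φ (q' 1, q' 2))
      (-(ContinuousLinearMap.proj 1 : R3 →L[ℝ] ℝ) + (fderiv ℝ (pdfst φ) p).comp L23) q :=
    ((ContinuousLinearMap.proj (R := ℝ) (φ := fun _ : Fin 3 => ℝ) 1).hasFDerivAt.neg).add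
      (hasF_comp23 (hpf p))
  have hw2 : HasFDerivAt (fun q' : R3 => pdsnd φ (q' 1, q' 2))
      ((fderiv ℝ (pdsnd φ) p).comp L23) q := hasF_comp23 (hps p)
  -- derivative of χ
  have hAd : HasFDerivAt (fun q' : R3 => Real.exp (ψ (q' 1, q' 2)) / 2)
      (((2 : ℝ)⁻¹) • (a • ((fderiv ℝ ψ p).comp L23))) q := by
    have h2 : (fun q' : R3 => Real.exp (ψ (q' 1, q' 2)) / 2)
        = fun q' : R3 => Real.exp (ψ (q' 1, q' 2)) * 2⁻¹ := by
      funext q'; rw [div_eq_mul_inv]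
    rw [h2]
    exact hA.mul_const _
  have hχ : HasFDerivAt χ
      (a • ((ContinuousLinearMap.proj 0 : R3 →L[ℝ] ℝ)
          + ((2 : ℝ)⁻¹) • (a • ((fderiv ℝ ψ p).comp L23)))
       + (q 0 + a / 2) • (a • ((fderiv ℝ ψ p).comp L23))) q :=
    hA.mul ((ContinuousLinearMap.proj (R := ℝ) (φ := fun _ : Fin 3 => ℝ) 0).hasFDerivAt.add hAd)
  -- pd values
  have pd00 : pd 0 (fun y => w y 0) q = 1 := by
    rw [pd, show (fun y : R3 => w y 0) = fun q' : R3 => q' 0 + Real.exp (ψ (q' 1, q' 2)) from rfl,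
      hw0.fderiv]
    simp [L23_single0, Pi.single_eq_same, Prod.mk_zero_zero]
  have pd10 : pd 1 (fun y => w y 0) q = a * sy := by
    rw [pd, show (fun y : R3 => w y 0) = fun q' : R3 => q' 0 + Real.exp (ψ (q' 1, q' 2)) from rfl,
      hw0.fderiv]
    simp [L23_single1, Pi.single_apply, hsy, pdfst]
  have pd20 : pd 2 (fun y => w y 0) q = a * sz := by
    rw [pd, show (fun y : R3 => w y 0) = fun q' : R3 => q' 0 + Real.exp (ψ (q' 1, q' 2)) from rfl,
      hw0.fderiv]
    simp [L23_single2, Pi.single_apply, hsz, pdsnd]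
  have pd01 : pd 0 (fun y => w y 1) q = 0 := by
    rw [pd, show (fun y : R3 => w y 1) = fun q' : R3 => -(q' 1) + pdfst φ (q' 1, q' 2) from rfl,
      hw1.fderiv]
    simp [L23_single0, Pi.single_apply, Prod.mk_zero_zero]
  have pd11 : pd 1 (fun y => w y 1) q = -1 + pdfst (pdfst φ) p := by
    rw [pd, show (fun y : R3 => w y 1) = fun q' : R3 => -(q' 1) + pdfst φ (q' 1, q' 2) from rfl,
      hw1.fderiv]
    simp [L23_single1, Pi.single_apply, pdfst]
  have pd21 : pd 2 (fun y => w y 1) q = pdsnd (pdfst φ) p := by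
    rw [pd, show (fun y : R3 => w y 1) = fun q' : R3 => -(q' 1) + pdfst φ (q' 1, q' 2) from rfl,
      hw1.fderiv]
    simp [L23_single2, Pi.single_apply, pdsnd]
  have pd02 : pd 0 (fun y => w y 2) q = 0 := by
    rw [pd, show (fun y : R3 => w y 2) = fun q' : R3 => pdsnd φ (q' 1, q' 2) from rfl, hw2.fderiv]
    simp [L23_single0, Prod.mk_zero_zero]
  have pd12 : pd 1 (fun y => w y 2) q = pdfst (pdsnd φ) p := by
    rw [pd, show (fun y : R3 => w y 2) = fun q' : R3 => pdsnd φ (q' 1, q' 2) from rfl, hw2.fderiv]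
    simp [L23_single1, pdfst]
  have pd22 : pd 2 (fun y => w y 2) q = pdsnd (pdsnd φ) p := by
    rw [pd, show (fun y : R3 => w y 2) = fun q' : R3 => pdsnd φ (q' 1, q' 2) from rfl, hw2.fderiv]
    simp [L23_single2, pdsnd]
  have pdχ0 : pd 0 χ q = a := by
    rw [pd, hχ.fderiv]
    simp [L23_single0, Pi.single_apply, Prod.mk_zero_zero]
  have pdχ1 : pd 1 χ q = (q 0 + a) * (a * sy) := by
    rw [pd, hχ.fderiv]
    simp [L23_single1, Pi.single_apply, hsy, pdfst]
    ring
  have pdχ2 : pd 2 χ q = (q 0 + a) * (a * sz) := by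
    rw [pd, hχ.fderiv]
    simp [L23_single2, Pi.single_apply, hsz, pdsnd]
    ring
  have hh := hharm p hq
  have hc := hchar p hq
  rw [← hsy, ← hsz, ← hfy, ← hfz] at hc
  constructor
  · show pd 0 (fun y => w y 0) q + pd 1 (fun y => w y 1) q + pd 2 (fun y => w y 2) q = 0
    rw [pd00, pd11, pd22]
    linarith
  · have hcl : pdfst (pdsnd φ) p = pdsnd (pdfst φ) p := clairaut φ hφ p
    have hw0v : w q 0 = q 0 + a := rfl
    have hw1v : w q 1 = -(q 1) + fy := rfl
    have hw2v : w q 2 = fz := rfl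
    have hcurl : vcurl w q = ![0, a * sz, -(a * sy)] := by
      show (![pd 1 (fun y => w y 2) q - pd 2 (fun y => w y 1) q,
        pd 2 (fun y => w y 0) q - pd 0 (fun y => w y 2) q,
        pd 0 (fun y => w y 1) q - pd 1 (fun y => w y 0) q] : R3) = _
      rw [pd12, pd21, pd20, pd02, pd01, pd10, hcl]
      norm_num
    rw [cross_apply, hcurl]
    funext i
    fin_cases i <;>
      simp only [Fin.zero_eta, Fin.mk_one, Matrix.cons_val_zero, Matrix.cons_val_one,
        Matrix.head_cons, Matrix.cons_val_two, Matrix.tail_cons, grad3]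
    · show w q 1 * _ - w q 2 * _ = pd 0 χ q
      rw [hw1v, hw2v, pdχ0]
      have hc' : -(q 1) * sy + fy * sy + fz * sz = -1 := hc
      linear_combination (-a) * hc'
    · show w q 2 * _ - w q 0 * _ = pd 1 χ q
      rw [hw0v, hw2v, pdχ1]; ring
    · show w q 0 * _ - w q 1 * _ = pd 2 χ q
      rw [hw0v, hw1v, pdχ2]; ring
end
end

section
/- Define w : ℝ³ → ℝ³ by w(x,y,z) = (x + y²e^z, −y, 1), which equals ∇((x²−y²)/2 + z) + y²e^z ∇x, and define χ(x,y,z) = y²e^z(x + y²e^z/2). Then on all of ℝ³: div w = 0 and w × (curl w) = ∇χ; thus w is a smooth magnetofluidostatic field with pressure field χ, and ∇χ ≠ 0 at every point with y ≠ 0. -/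
noncomputable section

lemma hasF_coord (i : Fin 3) (p : R3) :
    HasFDerivAt (fun y : R3 => y i)
      (ContinuousLinearMap.proj (R := ℝ) (φ := fun _ : Fin 3 => ℝ) i) p :=
  (ContinuousLinearMap.proj (R := ℝ) (φ := fun _ : Fin 3 => ℝ) i).hasFDerivAt

/-- the field `w = (x + y²eᶻ, −y, 1)` is a smooth magnetofluidostatic
field on all of ℝ³ with pressure field `χ = y²eᶻ(x + y²eᶻ/2)`, whose pressure
gradient is nonzero wherever `y ≠ 0`. -/
theorem explicit_mfs_ysq_expz :
    let w : R3 → R3 := fun p =>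
      ![p 0 + (p 1) ^ 2 * Real.exp (p 2), -(p 1), 1]
    let χ : R3 → ℝ := fun p =>
      (p 1) ^ 2 * Real.exp (p 2) * (p 0 + (p 1) ^ 2 * Real.exp (p 2) / 2)
    ∀ p : R3,
      vdiv w p = 0
      ∧ crossProduct (w p) (vcurl w p) = grad3 χ p
      ∧ (p 1 ≠ 0 → grad3 χ p ≠ 0) := by
  
  intro w χ p
  have c0 := hasF_coord 0 p
  have c1 := hasF_coord 1 p
  have c2 := hasF_coord 2 p
  have ef : (fun y : R3 => y 0 + (y 1) ^ 2 * Real.exp (y 2))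
      = fun y : R3 => y 0 + y 1 * y 1 * Real.exp (y 2) := by funext y; ring
  have e0 : (fun y : R3 => w y 0) = fun y : R3 => y 0 + (y 1) ^ 2 * Real.exp (y 2) := rfl
  have e1 : (fun y : R3 => w y 1) = fun y : R3 => -(y 1) := rfl
  have e2 : (fun y : R3 => w y 2) = fun _ : R3 => (1 : ℝ) := rfl
  have eχ : χ = fun y : R3 =>
      (y 1 * y 1 * Real.exp (y 2)) * (y 0 + (y 1 * y 1 * Real.exp (y 2)) * 2⁻¹) := by
    funext y
    show (y 1) ^ 2 * Real.exp (y 2) * (y 0 + (y 1) ^ 2 * Real.exp (y 2) / 2) = _; ring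
  have hw0 : HasFDerivAt (fun y : R3 => y 0 + y 1 * y 1 * Real.exp (y 2)) _ p := c0.add (((c1.mul c1)).mul (c2.exp))
  have hw1 : HasFDerivAt (fun y : R3 => -(y 1)) _ p := c1.neg
  have hχ : HasFDerivAt (fun y : R3 =>
      (y 1 * y 1 * Real.exp (y 2)) * (y 0 + (y 1 * y 1 * Real.exp (y 2)) * 2⁻¹)) _ p := (((c1.mul c1)).mul (c2.exp)).mul
    (c0.add ((((c1.mul c1)).mul (c2.exp)).mul_const (2⁻¹ : ℝ)))
  have pw00 : pd 0 (fun y : R3 => y 0 + (y 1) ^ 2 * Real.exp (y 2)) p = 1 := by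
    rw [ef, pd, hw0.fderiv]; simp [Pi.single_apply]
  have pw01 : pd 1 (fun y : R3 => y 0 + (y 1) ^ 2 * Real.exp (y 2)) p
      = 2 * p 1 * Real.exp (p 2) := by
    rw [ef, pd, hw0.fderiv]; simp [Pi.single_apply]; ring
  have pw02 : pd 2 (fun y : R3 => y 0 + (y 1) ^ 2 * Real.exp (y 2)) p
      = p 1 ^ 2 * Real.exp (p 2) := by
    rw [ef, pd, hw0.fderiv]; simp [Pi.single_apply]; ring
  have pw10 : pd 0 (fun y : R3 => -(y 1)) p = 0 := by
    rw [pd, hw1.fderiv]; simp [Pi.single_apply]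
  have pw11 : pd 1 (fun y : R3 => -(y 1)) p = -1 := by
    rw [pd, hw1.fderiv]; simp [Pi.single_apply]
  have pw12 : pd 2 (fun y : R3 => -(y 1)) p = 0 := by
    rw [pd, hw1.fderiv]; simp [Pi.single_apply]
  have pw2 : ∀ i : Fin 3, pd i (fun _ : R3 => (1 : ℝ)) p = 0 := by
    intro i; rw [pd]; simp
  have pχ0 : pd 0 χ p = p 1 ^ 2 * Real.exp (p 2) := by
    rw [eχ, pd, hχ.fderiv]; simp [Pi.single_apply]; ring
  have pχ1 : pd 1 χ p = 2 * p 1 * Real.exp (p 2) * (p 0 + p 1 ^ 2 * Real.exp (p 2)) := by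
    rw [eχ, pd, hχ.fderiv]; simp [Pi.single_apply]; ring
  have pχ2 : pd 2 χ p = p 1 ^ 2 * Real.exp (p 2) * (p 0 + p 1 ^ 2 * Real.exp (p 2)) := by
    rw [eχ, pd, hχ.fderiv]; simp [Pi.single_apply]; ring
  refine ⟨?_, ?_, ?_⟩
  · rw [vdiv, e0, e1, e2, pw00, pw11, pw2 2]; norm_num
  · funext i
    fin_cases i <;>
      simp [cross_apply, vcurl, grad3, w, pw00, pw01, pw02, pw10, pw11, pw12,
        pw2 0, pw2 1, pw2 2, pχ0, pχ1, pχ2] <;> ring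
  · intro hy hgrad
    have h0 : pd 0 χ p = 0 := by
      have := congrFun hgrad 0
      simpa [grad3] using this
    rw [pχ0] at h0
    rcases mul_eq_zero.mp h0 with h | h
    · exact hy (pow_eq_zero_iff two_ne_zero |>.mp h)
    · exact Real.exp_ne_zero _ h
end
end

section
/- Let Ω = {(x,y,z) ∈ ℝ³ : x² + y² > 0} and define w : Ω → ℝ³ by w(x,y,z) = ((x cos z − y sin z)/(x²+y²), (y cos z + x sin z)/(x²+y²), 0), which equals cos z ∇(log r) + sin z ∇ϑ in cylindrical coordinates (r, ϑ, z). Then on Ω: div w = 0, curl w = −w (so w is a solenoidal Beltrami field with proportionality coefficient −1), and w is invariant under rotation about the z-axis: the Lie derivative L_ξ w = 0 on Ω for ξ(x,y,z) = (−y, x, 0). -/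
noncomputable section

set_option maxHeartbeats 1000000 in
/-- the cylindrical field
`w = ((x cos z − y sin z)/(x²+y²), (y cos z + x sin z)/(x²+y²), 0)` is a
solenoidal Beltrami field with proportionality coefficient `−1` away from the
`z`-axis, and is invariant under rotations about the `z`-axis. -/
theorem cylindrical_beltrami_rotation_symmetric :
    let w : R3 → R3 := fun p =>
      ![(p 0 * Real.cos (p 2) - p 1 * Real.sin (p 2)) / ((p 0) ^ 2 + (p 1) ^ 2),
        (p 1 * Real.cos (p 2) + p 0 * Real.sin (p 2)) / ((p 0) ^ 2 + (p 1) ^ 2),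
        0]
    let ξ : R3 → R3 := fun p => ![-(p 1), p 0, 0]
    ∀ p : R3, (p 0) ^ 2 + (p 1) ^ 2 > 0 →
      vdiv w p = 0
      ∧ vcurl w p = (-1 : ℝ) • w p
      ∧ lieD ξ w p = 0 := by
  intro w ξ p hp
  have hne : (p 0) ^ 2 + (p 1) ^ 2 ≠ 0 := ne_of_gt hp
  have hx := hasFDerivAt_apply (𝕜 := ℝ) (0 : Fin 3) p
  have hy := hasFDerivAt_apply (𝕜 := ℝ) (1 : Fin 3) p
  have hz := hasFDerivAt_apply (𝕜 := ℝ) (2 : Fin 3) p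
  have hne' : p 0 * p 0 + p 1 * p 1 ≠ 0 := by simpa [pow_two] using hne
  have hg := (hx.mul hx).add (hy.mul hy)
  have hginv : HasFDerivAt (fun q : R3 => (q 0 * q 0 + q 1 * q 1)⁻¹) _ p :=
    (hasFDerivAt_inv' hne').comp p hg
  have H1 := ((hx.mul hz.cos).sub (hy.mul hz.sin)).mul hginv
  have H2 := ((hy.mul hz.cos).add (hx.mul hz.sin)).mul hginv
  have e0 : (fun y : R3 => w y 0)
      = fun q : R3 => (q 0 * Real.cos (q 2) - q 1 * Real.sin (q 2)) * (q 0 * q 0 + q 1 * q 1)⁻¹ := by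
    funext q; simp [w, div_eq_mul_inv, pow_two]
  have e1 : (fun y : R3 => w y 1)
      = fun q : R3 => (q 1 * Real.cos (q 2) + q 0 * Real.sin (q 2)) * (q 0 * q 0 + q 1 * q 1)⁻¹ := by
    funext q; simp [w, div_eq_mul_inv, pow_two]
  have e2 : (fun y : R3 => w y 2) = fun _ : R3 => (0 : ℝ) := by
    funext q; simp [w]
  have P0 : ∀ i : Fin 3, pd i (fun y => w y 0) p
      = (p 0 * Real.cos (p 2) - p 1 * Real.sin (p 2)) *
          (-(((p 0 * p 0 + p 1 * p 1)⁻¹) * (2 * p 0 * (Pi.single i 1 : R3) 0 + 2 * p 1 * (Pi.single i 1 : R3) 1) * ((p 0 * p 0 + p 1 * p 1)⁻¹)))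
        + (p 0 * p 0 + p 1 * p 1)⁻¹ *
          (p 0 * (-Real.sin (p 2) * (Pi.single i 1 : R3) 2) + Real.cos (p 2) * (Pi.single i 1 : R3) 0
            - (p 1 * (Real.cos (p 2) * (Pi.single i 1 : R3) 2) + Real.sin (p 2) * (Pi.single i 1 : R3) 1)) := by
    intro i
    simp only [pd]
    rw [e0, HasFDerivAt.fderiv (f := fun q : R3 => (q 0 * Real.cos (q 2) - q 1 * Real.sin (q 2)) * (q 0 * q 0 + q 1 * q 1)⁻¹) H1]
    simp [ContinuousLinearMap.mulLeftRight_apply]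
    ring
  have P1 : ∀ i : Fin 3, pd i (fun y => w y 1) p
      = (p 1 * Real.cos (p 2) + p 0 * Real.sin (p 2)) *
          (-(((p 0 * p 0 + p 1 * p 1)⁻¹) * (2 * p 0 * (Pi.single i 1 : R3) 0 + 2 * p 1 * (Pi.single i 1 : R3) 1) * ((p 0 * p 0 + p 1 * p 1)⁻¹)))
        + (p 0 * p 0 + p 1 * p 1)⁻¹ *
          (p 1 * (-Real.sin (p 2) * (Pi.single i 1 : R3) 2) + Real.cos (p 2) * (Pi.single i 1 : R3) 1
            + (p 0 * (Real.cos (p 2) * (Pi.single i 1 : R3) 2) + Real.sin (p 2) * (Pi.single i 1 : R3) 0)) := by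
    intro i
    simp only [pd]
    rw [e1, HasFDerivAt.fderiv (f := fun q : R3 => (q 1 * Real.cos (q 2) + q 0 * Real.sin (q 2)) * (q 0 * q 0 + q 1 * q 1)⁻¹) H2]
    simp [ContinuousLinearMap.mulLeftRight_apply]
    ring
  have P2 : ∀ i : Fin 3, pd i (fun y => w y 2) p = 0 := by
    intro i
    simp only [pd]
    rw [e2]
    simp
  have X0 : ∀ i : Fin 3, pd i (fun y => ξ y 0) p = -((Pi.single i 1 : R3) 1 : ℝ) := by
    intro i
    have h := hy.neg
    simp only [pd]
    rw [show (fun y : R3 => ξ y 0) = fun y : R3 => -(y 1) from by funext q; simp [ξ], HasFDerivAt.fderiv (f := fun y : R3 => -(y 1)) h]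
    simp
  have X1 : ∀ i : Fin 3, pd i (fun y => ξ y 1) p = ((Pi.single i 1 : R3) 0 : ℝ) := by
    intro i
    simp only [pd]
    rw [show (fun y : R3 => ξ y 1) = fun y : R3 => y 0 from by funext q; simp [ξ], hx.fderiv]
    simp
  have X2 : ∀ i : Fin 3, pd i (fun y => ξ y 2) p = 0 := by
    intro i
    simp only [pd]
    rw [show (fun y : R3 => ξ y 2) = fun _ : R3 => (0:ℝ) from by funext q; simp [ξ]]
    simp
  have p00 := P0 0; have p10 := P0 1; have p20 := P0 2
  have p01 := P1 0; have p11 := P1 1; have p21 := P1 2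
  have x00 := X0 0; have x10 := X0 1; have x20 := X0 2
  have x01 := X1 0; have x11 := X1 1; have x21 := X1 2
  simp [Pi.single_apply, Fin.ext_iff] at p00 p10 p20 p01 p11 p21 x00 x10 x20 x01 x11 x21
  clear hx hy hz hg hginv H1 H2 e0 e1 e2 P0 P1 X0 X1
  have wv0 : w p 0 = (p 0 * Real.cos (p 2) - p 1 * Real.sin (p 2)) / ((p 0)^2 + (p 1)^2) := by
    simp [w]
  have wv1 : w p 1 = (p 1 * Real.cos (p 2) + p 0 * Real.sin (p 2)) / ((p 0)^2 + (p 1)^2) := by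
    simp [w]
  have wv2 : w p 2 = 0 := by simp [w]
  have xv0 : ξ p 0 = -(p 1) := by simp [ξ]
  have xv1 : ξ p 1 = p 0 := by simp [ξ]
  have xv2 : ξ p 2 = 0 := by simp [ξ]
  refine ⟨?_, ?_, ?_⟩
  · rw [vdiv, p00, p11, P2 2]
    field_simp
    ring
  · funext j
    fin_cases j
    · show pd 1 (fun y => w y 2) p - pd 2 (fun y => w y 1) p = (-1 : ℝ) • w p 0
      rw [P2 1, p21, wv0, smul_eq_mul]
      field_simp
      ring
    · show pd 2 (fun y => w y 0) p - pd 0 (fun y => w y 2) p = (-1 : ℝ) • w p 1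
      rw [P2 0, p20, wv1, smul_eq_mul]
      field_simp
      ring
    · show pd 0 (fun y => w y 1) p - pd 1 (fun y => w y 0) p = (-1 : ℝ) • w p 2
      rw [p01, p10, wv2, smul_eq_mul]
      field_simp
      ring
  · have c0 : lieD ξ w p 0 = 0 := by
      simp only [lieD, Pi.sub_apply, dirDeriv, Fin.sum_univ_three]
      rw [p00, p10, p20, x00, x10, x20, wv0, wv1, wv2, xv0, xv1, xv2]
      field_simp
      ring
    have c1 : lieD ξ w p 1 = 0 := by
      simp only [lieD, Pi.sub_apply, dirDeriv, Fin.sum_univ_three]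
      rw [p01, p11, p21, x01, x11, x21, wv0, wv1, wv2, xv0, xv1, xv2]
      field_simp
      ring
    have c2 : lieD ξ w p 2 = 0 := by
      simp only [lieD, Pi.sub_apply, dirDeriv, Fin.sum_univ_three]
      rw [P2 0, P2 1, P2 2, X2 0, X2 1, X2 2, wv2, xv2]
      ring
    funext j
    fin_cases j
    exacts [c0, c1, c2]
end
end
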